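/- Let 4 < p < 6 and suppose for each n, uₙ ∈ H₀¹(Ω) satisfies the Nehari identity ‖uₙ‖₀² + F₀(uₙ) = μₙ∫|uₙ|^p + ∫|uₙ|⁶ with μₙ → 0, the norms ‖uₙ‖₀ are bounded, and tₙ > 0 satisfies tₙuₙ ∈ N₀, i.e., tₙ²‖uₙ‖₀² + tₙ⁴F₀(uₙ) = tₙ⁶∫|uₙ|⁶. If the energies I_{μₙ}(uₙ) are bounded away from 0, then (tₙ) is bounded. -/

import Mathlib

open MeasureTheory Real

local notation "E3" => EuclideanSpace ℝ (Fin 3)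

/-- The Riesz/Poisson double-integral term `F₀(u) = (1/4π) ∬ u²(x)u²(y)/|x-y|` over `Ω × Ω`. -/
noncomputable def rieszTerm₀ (s : Set E3) (u : E3 → ℝ) : ℝ :=
  (1 / (4 * Real.pi)) * ∫ x in s, ∫ y in s, (u x) ^ 2 * (u y) ^ 2 / dist x y

/-- The squared gradient (Dirichlet) norm `‖u‖₀² = ∫_Ω |∇u|²`. -/
noncomputable def gradNorm2₀ (s : Set E3) (u : E3 → ℝ) : ℝ :=
  ∫ x in s, ‖gradient u x‖ ^ 2

/-- The limit-problem energy functional `I_μ` on `Ω`. -/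
noncomputable def Imu₀ (Ω : Set E3) (μ p : ℝ) (u : E3 → ℝ) : ℝ :=
  1 / 2 * gradNorm2₀ Ω u + 1 / 4 * rieszTerm₀ Ω u -
    μ / p * ∫ x in Ω, |u x| ^ p - 1 / 6 * ∫ x in Ω, |u x| ^ 6

/-!
The `N₀`-identity reads `∫|uₙ|⁶ = ‖uₙ‖₀²/tₙ⁴ + F₀(uₙ)/tₙ²`, so as soon as `tₙ² ≥ 2` we get
`2∫|uₙ|⁶ ≤ ‖uₙ‖₀² + F₀(uₙ)`, while the Nehari identity bounds the right-hand side by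
`μₙ · O(1 + ∫|uₙ|⁶)` (using `|u|^p ≤ 1 + |u|⁶` on the bounded set `Ω`). For small `μₙ` this makes
`∫|uₙ|⁶`, `‖uₙ‖₀²` and `F₀(uₙ)` all `O(μₙ)`, hence `I_{μₙ}(uₙ) = O(μₙ)`, contradicting
`I_{μₙ}(uₙ) ≥ δ`. So `tₙ² < 2` for all large `n`.
-/

open Filter Set

lemma gradNorm2₀_nonneg (s : Set E3) (u : E3 → ℝ) : 0 ≤ gradNorm2₀ s u :=
  integral_nonneg fun _ => by positivity

lemma rieszTerm₀_nonneg (s : Set E3) (u : E3 → ℝ) : 0 ≤ rieszTerm₀ s u :=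
  mul_nonneg (by positivity) <| integral_nonneg fun _ => integral_nonneg fun _ =>
    div_nonneg (by positivity) dist_nonneg

lemma Real.rpow_le_one_add_pow {x p : ℝ} {n : ℕ} (hx : 0 ≤ x) (hp : 0 ≤ p) (hpn : p ≤ n) :
    x ^ p ≤ 1 + x ^ n := by
  rcases le_total x 1 with h | h
  · linarith [Real.rpow_le_one hx h hp, pow_nonneg hx n]
  · have := Real.rpow_le_rpow_of_exponent_le h hpn
    rw [Real.rpow_natCast] at this
    linarith

namespace MeasureTheory

variable {α : Type*} [MeasurableSpace α] {ν : Measure α} {f : α → ℝ} {n : ℕ} {p : ℝ}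

lemma MemLp.integrable_abs_pow (hf : MemLp f n ν) (hn : n ≠ 0) :
    Integrable (fun x => |f x| ^ n) ν := by
  simpa using hf.integrable_norm_rpow (by exact_mod_cast hn) (by simp)

variable [IsFiniteMeasure ν]

lemma MemLp.integrable_abs_rpow (hf : MemLp f n ν) (hp : 0 < p) (hpn : p ≤ n) :
    Integrable (fun x => |f x| ^ p) ν := by
  have hfp : MemLp f (ENNReal.ofReal p) ν :=
    hf.mono_exponent (by simpa using ENNReal.ofReal_le_ofReal hpn)
  simpa [hp.le] using hfp.integrable_norm_rpow (by simpa using hp) (by simp)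

lemma MemLp.integral_abs_rpow_le (hf : MemLp f n ν) (hp : 0 < p) (hpn : p ≤ n) :
    ∫ x, |f x| ^ p ∂ν ≤ ν.real univ + ∫ x, |f x| ^ n ∂ν := by
  have hn : n ≠ 0 := by rintro rfl; simp at hpn; linarith
  have hsum := (integrable_const (1 : ℝ)).add (hf.integrable_abs_pow hn)
  calc ∫ x, |f x| ^ p ∂ν ≤ ∫ x, (1 + |f x| ^ n) ∂ν :=
        integral_mono (hf.integrable_abs_rpow hp hpn) hsum fun _ =>
          Real.rpow_le_one_add_pow (abs_nonneg _) hp.le hpn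
    _ = ν.real univ + ∫ x, |f x| ^ n ∂ν := by
        rw [integral_add (integrable_const 1) (hf.integrable_abs_pow hn), integral_const,
          smul_eq_mul, mul_one]

lemma integral_add_const_of_integrable {g : α → ℝ} (hg : Integrable g ν) (K : ℝ) :
    ∫ x, (g x + K) ∂ν = ∫ x, g x ∂ν + ν.real univ * K := by
  rw [integral_add hg (integrable_const K), integral_const, smul_eq_mul]

lemma integral_sub_const_of_integrable {g : α → ℝ} (hg : Integrable g ν) (K : ℝ) :
    ∫ x, (g x - K) ∂ν = ∫ x, g x ∂ν - ν.real univ * K := by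
  rw [integral_sub hg (integrable_const K), integral_const, smul_eq_mul]

end MeasureTheory

lemma two_mul_le_add_of_scaling_identity {a b c s : ℝ} (ha : 0 ≤ a) (hb : 0 ≤ b)
    (hs : 2 ≤ s ^ 2) (h : s ^ 2 * a + s ^ 4 * b = s ^ 6 * c) : 2 * c ≤ a + b := by
  have hs2 : 0 < s ^ 2 := by linarith
  have hc : s ^ 4 * c = a + s ^ 2 * b := by
    refine mul_left_cancel₀ hs2.ne' ?_
    linear_combination -h
  refine le_of_mul_le_mul_left ?_ (by nlinarith : (0 : ℝ) < s ^ 4)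
  nlinarith [mul_nonneg (by nlinarith : (0 : ℝ) ≤ s ^ 4 - 2) ha,
    mul_nonneg (mul_nonneg hs2.le (sub_nonneg.2 hs)) hb]

/-- Here `a = ‖u‖₀²`, `b = F₀(u)`, `c = ∫|u|⁶`, `d = ∫|u|^p`, `V = |Ω|`. The terms `V * c` arise because
`∫ x in Ω, |u x| ^ p + ∫ x in Ω, |u x| ^ 6`, in the Nehari identity and in `Imu₀`, parses as a single
integral over `Ω` whose integrand contains the constant `∫|u|⁶`. -/
lemma energy_le_of_nehari {a b c d V m p δ : ℝ} (hb : 0 ≤ b) (hc : 0 ≤ c) (hd : 0 ≤ d)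
    (hV : 0 ≤ V) (hm : 0 ≤ m) (hp : 4 ≤ p) (hmV : m * (1 + V) ≤ 1) (hcab : 2 * c ≤ a + b)
    (hdc : d ≤ V + c) (hNehari : a + b = m * (d + V * c))
    (hI : δ ≤ 1 / 2 * a + 1 / 4 * b - m / p * (d - V * (1 / 6 * c))) :
    δ ≤ m * V + (m * V) ^ 2 / 24 := by
  have hmc : m * (1 + V) * c ≤ c := by nlinarith
  have hab : a + b ≤ m * V + c := by nlinarith
  have hc' : c ≤ m * V := by linarith
  have hmp : m / p ≤ m / 4 := div_le_div_of_nonneg_left hm (by norm_num) hp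
  have hmpd : 0 ≤ m / p * d := mul_nonneg (div_nonneg hm (by linarith)) hd
  have hVc : m / p * (V * c) ≤ m / 4 * (V * (m * V)) :=
    mul_le_mul hmp (mul_le_mul_of_nonneg_left hc' hV) (by positivity) (by positivity)
  nlinarith

lemma energy_le_of_scaling_nehari {Ω : Set E3} [IsFiniteMeasure (volume.restrict Ω)]
    {u : E3 → ℝ} (hu : MemLp u 6 (volume.restrict Ω)) {p m s δ : ℝ} (hp4 : 4 ≤ p) (hp6 : p ≤ 6)
    (hm : 0 ≤ m) (hmV : m * (1 + volume.real Ω) ≤ 1)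
    (hNehari : gradNorm2₀ Ω u + rieszTerm₀ Ω u
        = m * ∫ x in Ω, |u x| ^ p + ∫ x in Ω, |u x| ^ 6)
    (hs : 2 ≤ s ^ 2)
    (hsN : s ^ 2 * gradNorm2₀ Ω u + s ^ 4 * rieszTerm₀ Ω u = s ^ 6 * ∫ x in Ω, |u x| ^ 6)
    (hI : δ ≤ Imu₀ Ω m p u) :
    δ ≤ m * volume.real Ω + (m * volume.real Ω) ^ 2 / 24 := by
  have hu6 : MemLp u (6 : ℕ) (volume.restrict Ω) := by exact_mod_cast hu
  have hp0 : 0 < p := by linarith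
  have hp6' : p ≤ (6 : ℕ) := by exact_mod_cast hp6
  have hup := hu6.integrable_abs_rpow hp0 hp6'
  rw [integral_add_const_of_integrable hup, measureReal_restrict_apply_univ] at hNehari
  rw [Imu₀, integral_sub_const_of_integrable hup, measureReal_restrict_apply_univ] at hI
  have hdc := hu6.integral_abs_rpow_le hp0 hp6'
  rw [measureReal_restrict_apply_univ] at hdc
  exact energy_le_of_nehari (rieszTerm₀_nonneg Ω u) (integral_nonneg fun _ => by positivity)
    (integral_nonneg fun _ => by positivity) measureReal_nonneg hm hp4 hmV
    (two_mul_le_add_of_scaling_identity (gradNorm2₀_nonneg Ω u) (rieszTerm₀_nonneg Ω u) hs hsN)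
    hdc hNehari hI

theorem stmt_16_general (Ω : Set E3) (hΩb : Bornology.IsBounded Ω)
    (p : ℝ) (hp4 : 4 < p) (hp6 : p < 6)
    (μ : ℕ → ℝ) (hμpos : ∀ n, 0 < μ n) (hμ : Filter.Tendsto μ Filter.atTop (nhds 0))
    (u : ℕ → E3 → ℝ)
    (hL6 : ∀ n, MemLp (u n) 6 (volume.restrict Ω))
    (hNehari : ∀ n, gradNorm2₀ Ω (u n) + rieszTerm₀ Ω (u n)
        = μ n * ∫ x in Ω, |u n x| ^ p + ∫ x in Ω, |u n x| ^ 6)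
    (t : ℕ → ℝ)
    (htN : ∀ n, (t n) ^ 2 * gradNorm2₀ Ω (u n) + (t n) ^ 4 * rieszTerm₀ Ω (u n)
        = (t n) ^ 6 * ∫ x in Ω, |u n x| ^ 6)
    (δ : ℝ) (hδ : 0 < δ)
    (hI : ∀ n, δ ≤ Imu₀ Ω (μ n) p (u n)) :
    ∃ T : ℝ, ∀ n, t n ≤ T := by
  have : IsFiniteMeasure (volume.restrict Ω) := isFiniteMeasure_restrict.2 hΩb.measure_lt_top.ne
  set V := volume.real Ω
  have hsmall : ∀ᶠ n in atTop, μ n * (1 + V) < 1 := by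
    have hlim : Tendsto (fun n => μ n * (1 + V)) atTop (nhds 0) := by
      simpa using hμ.mul_const (1 + V)
    exact hlim.eventually_lt_const one_pos
  have hlow : ∀ᶠ n in atTop, μ n * V + (μ n * V) ^ 2 / 24 < δ := by
    have hcont : Continuous fun m : ℝ => m * V + (m * V) ^ 2 / 24 := by fun_prop
    have hlim : Tendsto (fun n => μ n * V + (μ n * V) ^ 2 / 24) atTop (nhds 0) := by
      simpa [Function.comp_def] using (hcont.tendsto 0).comp hμ
    exact hlim.eventually_lt_const hδ
  have hbdd : ∀ᶠ n in atTop, t n ≤ 2 := by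
    filter_upwards [hsmall, hlow] with n hsmall hlow
    by_contra! htn
    exact hlow.not_ge <| energy_le_of_scaling_nehari (hL6 n) hp4.le hp6.le (hμpos n).le hsmall.le
      (hNehari n) (by nlinarith) (htN n) (hI n)
  obtain ⟨T, hT⟩ := (isBoundedUnder_of_eventually_le hbdd).bddAbove_range
  exact ⟨T, fun n => hT (mem_range_self n)⟩

theorem stmt_16 (Ω : Set E3) (hΩ : IsOpen Ω) (hΩb : Bornology.IsBounded Ω)
    (p : ℝ) (hp4 : 4 < p) (hp6 : p < 6)
    (μ : ℕ → ℝ) (hμpos : ∀ n, 0 < μ n) (hμ : Filter.Tendsto μ Filter.atTop (nhds 0))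
    (u : ℕ → E3 → ℝ) (hdiff : ∀ n, Differentiable ℝ (u n))
    (hsupp : ∀ n, ∀ x ∉ Ω, u n x = 0)
    (hL6 : ∀ n, MemLp (u n) 6 (volume.restrict Ω))
    (hNehari : ∀ n, gradNorm2₀ Ω (u n) + rieszTerm₀ Ω (u n)
        = μ n * ∫ x in Ω, |u n x| ^ p + ∫ x in Ω, |u n x| ^ 6)
    (M : ℝ) (hM : ∀ n, gradNorm2₀ Ω (u n) ≤ M)
    (t : ℕ → ℝ) (ht : ∀ n, 0 < t n)
    (htN : ∀ n, (t n) ^ 2 * gradNorm2₀ Ω (u n) + (t n) ^ 4 * rieszTerm₀ Ω (u n)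
        = (t n) ^ 6 * ∫ x in Ω, |u n x| ^ 6)
    (δ : ℝ) (hδ : 0 < δ)
    (hI : ∀ n, δ ≤ Imu₀ Ω (μ n) p (u n)) :
    ∃ T : ℝ, ∀ n, t n ≤ T :=
  stmt_16_general Ω hΩb p hp4 hp6 μ hμpos hμ u hL6 hNehari t htN δ hδ hI
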